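/- arXiv:2311.05264 — 7 statements merged into one kernel-verified Lean document; each statement's English description precedes it below -/
import Mathlib

section
/- Let λ_T, η_T ∈ ℝ^n, T > 0, and define η(t) = λ_T + (η_T − λ_T)·e^{t−T} for t ∈ ℝ. Then there exists t ∈ (0, T] with η(t) = 0 if and only if ‖λ_T‖·‖η_T‖ = −⟨λ_T, η_T⟩ and e^{−T} < ‖λ_T‖/(‖λ_T‖ + ‖η_T‖). -/
/-!
Put `c = exp (t - T)`: then `t ∈ (0, T]` exactly when `c ∈ (exp (-T), 1]`, and
`η t = (1 - c) • λ_T + c • η_T`. A convex combination of `x` and `y` vanishes iff `x` and `-y`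
are equality cases of Cauchy–Schwarz, `‖y‖ • x + ‖x‖ • y = 0`, and the weight is
`c = ‖x‖ / (‖x‖ + ‖y‖)`.
-/

open Real

section ConvexCombination

variable {E : Type*} [NormedAddCommGroup E] [InnerProductSpace ℝ E] {x y : E}

theorem norm_smul_add_norm_smul_eq_zero_iff :
    ‖y‖ • x + ‖x‖ • y = 0 ↔ ‖x‖ * ‖y‖ = -(inner ℝ x y : ℝ) := by
  have h := inner_eq_norm_mul_iff_real (x := x) (y := -y)
  rw [inner_neg_right, norm_neg, smul_neg, ← add_eq_zero_iff_eq_neg] at h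
  rw [← h, eq_comm]

/-- Taking norms in `(1 - c) • x = -(c • y)` shows that the weights are proportional to the
norms, and then the combination is a multiple of `‖y‖ • x + ‖x‖ • y`. -/
theorem one_sub_smul_add_smul_eq_zero_iff (hxy : x ≠ 0 ∨ y ≠ 0) {c : ℝ} (hc₀ : 0 ≤ c)
    (hc₁ : c ≤ 1) :
    (1 - c) • x + c • y = 0 ↔ ‖y‖ • x + ‖x‖ • y = 0 ∧ c = ‖x‖ / (‖x‖ + ‖y‖) := by
  have hs : 0 < ‖x‖ + ‖y‖ := by
    rcases hxy with hx | hy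
    · exact add_pos_of_pos_of_nonneg (norm_pos_iff.mpr hx) (norm_nonneg y)
    · exact add_pos_of_nonneg_of_pos (norm_nonneg x) (norm_pos_iff.mpr hy)
  have hcomb : ‖x‖ = c * (‖x‖ + ‖y‖) →
      ‖y‖ • x + ‖x‖ • y = (‖x‖ + ‖y‖) • ((1 - c) • x + c • y) := fun hx => by
    have hy : ‖y‖ = (‖x‖ + ‖y‖) * (1 - c) := by linarith
    rw [smul_add, smul_smul, smul_smul, ← hy, mul_comm, ← hx]
  constructor
  · intro h
    have hnorm : (1 - c) * ‖x‖ = c * ‖y‖ := by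
      have := congrArg norm (eq_neg_of_add_eq_zero_left h)
      rwa [norm_neg, norm_smul, norm_smul, Real.norm_of_nonneg (by linarith),
        Real.norm_of_nonneg hc₀] at this
    have hx : ‖x‖ = c * (‖x‖ + ‖y‖) := by linarith
    exact ⟨by rw [hcomb hx, h, smul_zero], by rw [eq_div_iff hs.ne', ← hx]⟩
  · rintro ⟨h, rfl⟩
    have hx : ‖x‖ = ‖x‖ / (‖x‖ + ‖y‖) * (‖x‖ + ‖y‖) := (div_mul_cancel₀ _ hs.ne').symm
    rw [hcomb hx] at h
    exact (smul_eq_zero.mp h).resolve_left hs.ne'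

theorem exists_mem_Ioc_one_sub_smul_add_smul_eq_zero_iff (hxy : x ≠ 0 ∨ y ≠ 0) {a : ℝ}
    (ha : 0 ≤ a) :
    (∃ c ∈ Set.Ioc a 1, (1 - c) • x + c • y = 0) ↔
      ‖y‖ • x + ‖x‖ • y = 0 ∧ a < ‖x‖ / (‖x‖ + ‖y‖) := by
  constructor
  · rintro ⟨c, ⟨hac, hc₁⟩, h⟩
    obtain ⟨hxy', rfl⟩ := (one_sub_smul_add_smul_eq_zero_iff hxy (by linarith) hc₁).mp h
    exact ⟨hxy', hac⟩
  · rintro ⟨hxy', hlt⟩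
    have hle : ‖x‖ / (‖x‖ + ‖y‖) ≤ 1 :=
      div_le_one_of_le₀ (le_add_of_nonneg_right (norm_nonneg y)) (by positivity)
    exact ⟨_, ⟨hlt, hle⟩,
      (one_sub_smul_add_smul_eq_zero_iff hxy (by linarith) hle).mpr ⟨hxy', rfl⟩⟩

end ConvexCombination

theorem exists_mem_Ioc_exp_sub_iff (P : ℝ → Prop) (T : ℝ) :
    (∃ t ∈ Set.Ioc 0 T, P (exp (t - T))) ↔ ∃ c ∈ Set.Ioc (exp (-T)) 1, P c := by
  constructor
  · rintro ⟨t, ⟨ht₀, htT⟩, h⟩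
    exact ⟨_, ⟨exp_lt_exp.mpr (by linarith), exp_le_one_iff.mpr (by linarith)⟩, h⟩
  · rintro ⟨c, ⟨hTc, hc₁⟩, h⟩
    have hc₀ : 0 < c := (exp_pos _).trans hTc
    refine ⟨T + log c, ⟨?_, ?_⟩, by rwa [add_sub_cancel_left, exp_log hc₀]⟩
    · linarith [(lt_log_iff_exp_lt hc₀).mpr hTc]
    · linarith [log_nonpos hc₀.le hc₁]

theorem stmt_0_general (n : ℕ) (lamT etaT : EuclideanSpace ℝ (Fin n)) (T : ℝ)
    (hne : lamT ≠ 0 ∨ etaT ≠ 0) :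
    (∃ t ∈ Set.Ioc (0 : ℝ) T, lamT + Real.exp (t - T) • (etaT - lamT) = 0) ↔
      (‖lamT‖ * ‖etaT‖ = -(inner ℝ lamT etaT : ℝ) ∧
        Real.exp (-T) < ‖lamT‖ / (‖lamT‖ + ‖etaT‖)) := by
  have hcomb (c : ℝ) : lamT + c • (etaT - lamT) = (1 - c) • lamT + c • etaT := by module
  simp_rw [hcomb]
  rw [exists_mem_Ioc_exp_sub_iff (fun c => (1 - c) • lamT + c • etaT = 0),
    exists_mem_Ioc_one_sub_smul_add_smul_eq_zero_iff hne (exp_pos _).le,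
    norm_smul_add_norm_smul_eq_zero_iff]

theorem stmt_0 (n : ℕ) (lamT etaT : EuclideanSpace ℝ (Fin n)) (T : ℝ) (hT : 0 < T)
    (hne : lamT ≠ 0 ∨ etaT ≠ 0) :
    (∃ t ∈ Set.Ioc (0 : ℝ) T, lamT + Real.exp (t - T) • (etaT - lamT) = 0) ↔
      (‖lamT‖ * ‖etaT‖ = -(inner ℝ lamT etaT : ℝ) ∧
        Real.exp (-T) < ‖lamT‖ / (‖lamT‖ + ‖etaT‖)) :=
  stmt_0_general n lamT etaT T hne
end

section
/- Let λ_T, η_T ∈ ℝ^n with λ_T ≠ 0, satisfying ‖λ_T‖·‖η_T‖ = −⟨λ_T, η_T⟩ and e^{−T} < ‖λ_T‖/(‖λ_T‖ + ‖η_T‖) for some T > 0. Define η(t) = λ_T + (η_T − λ_T)e^{t−T}. Then the unique zero of η on (0, T] is t = θ := T + ln(‖λ_T‖/(‖λ_T‖ + ‖η_T‖)). -/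
open Real

/-!
Equality in Cauchy–Schwarz forces `η_T` to be a nonpositive multiple of `λ_T`, namely
`‖λ_T‖ • η_T = -‖η_T‖ • λ_T`. Hence `η(t)` is the scalar `1 - e^{t-T} (1 + ‖η_T‖/‖λ_T‖)` times `λ_T`,
which vanishes exactly when `e^{t-T} = ‖λ_T‖/(‖λ_T‖ + ‖η_T‖)`, i.e. at `t = θ`; the hypothesis on
`e^{-T}` puts `θ` in `(0, T]`.
-/

section Antiparallel

variable {F : Type*} [NormedAddCommGroup F] [InnerProductSpace ℝ F]

theorem norm_smul_eq_neg_norm_smul_of_inner_eq_neg {x y : F}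
    (h : ‖x‖ * ‖y‖ = -inner ℝ x y) : ‖x‖ • y = -(‖y‖ • x) := by
  have hneg : inner ℝ x (-y) = ‖x‖ * ‖-y‖ := by rw [inner_neg_right, norm_neg]; linarith
  have := inner_eq_norm_mul_iff_real.mp hneg
  rw [norm_neg, smul_neg] at this
  rw [this, neg_neg]

theorem add_smul_sub_eq_zero_iff_of_inner_eq_neg {x y : F} (hx : x ≠ 0)
    (h : ‖x‖ * ‖y‖ = -inner ℝ x y) (s : ℝ) :
    x + s • (y - x) = 0 ↔ s = ‖x‖ / (‖x‖ + ‖y‖) := by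
  have hnx : 0 < ‖x‖ := norm_pos_iff.mpr hx
  have hsum : ‖x‖ + ‖y‖ ≠ 0 := by positivity
  have hscaled : ‖x‖ • (x + s • (y - x)) = (‖x‖ - s * (‖x‖ + ‖y‖)) • x := by
    rw [smul_add, smul_sub, smul_sub, smul_comm ‖x‖ s y,
      norm_smul_eq_neg_norm_smul_of_inner_eq_neg h]
    module
  rw [← (smul_right_injective F hnx.ne').eq_iff, smul_zero, hscaled,
    smul_eq_zero, or_iff_left hx, eq_div_iff hsum]
  constructor <;> intro _ <;> linarith

end Antiparallel

theorem add_log_mem_Ioc_of_exp_neg_lt {T r : ℝ} (hr : r ≤ 1) (hexp : exp (-T) < r) :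
    T + log r ∈ Set.Ioc 0 T := by
  have hr0 : 0 < r := (exp_pos _).trans hexp
  have hlog : -T < log r := (lt_log_iff_exp_lt hr0).mpr hexp
  exact ⟨by linarith, by linarith [log_nonpos hr0.le hr]⟩

theorem exp_sub_eq_iff_eq_add_log {t T r : ℝ} (hr : 0 < r) :
    exp (t - T) = r ↔ t = T + log r := by
  rw [← exp_log hr, exp_eq_exp, log_exp]
  constructor <;> intro _ <;> linarith

theorem stmt_1_general (n : ℕ) (lamT etaT : EuclideanSpace ℝ (Fin n))
    (T : ℝ)
    (hanti : ‖lamT‖ * ‖etaT‖ = -(inner ℝ lamT etaT : ℝ))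
    (hcond : Real.exp (-T) < ‖lamT‖ / (‖lamT‖ + ‖etaT‖))
    (θ : ℝ) (hθ : θ = T + Real.log (‖lamT‖ / (‖lamT‖ + ‖etaT‖))) :
    θ ∈ Set.Ioc (0 : ℝ) T ∧
      ∀ t ∈ Set.Ioc (0 : ℝ) T,
        (lamT + Real.exp (t - T) • (etaT - lamT) = 0 ↔ t = θ) := by
  have hratio_pos : 0 < ‖lamT‖ / (‖lamT‖ + ‖etaT‖) := (exp_pos _).trans hcond
  have hratio_le : ‖lamT‖ / (‖lamT‖ + ‖etaT‖) ≤ 1 :=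
    div_le_one_of_le₀ (le_add_of_nonneg_right (norm_nonneg _)) (by positivity)
  have hlam : lamT ≠ 0 := by
    rintro rfl
    simp at hratio_pos
  subst hθ
  refine ⟨add_log_mem_Ioc_of_exp_neg_lt hratio_le hcond, fun t _ => ?_⟩
  rw [add_smul_sub_eq_zero_iff_of_inner_eq_neg hlam hanti, exp_sub_eq_iff_eq_add_log hratio_pos]

theorem stmt_1 (n : ℕ) (lamT etaT : EuclideanSpace ℝ (Fin n)) (hlam : lamT ≠ 0)
    (T : ℝ) (hT : 0 < T)
    (hanti : ‖lamT‖ * ‖etaT‖ = -(inner ℝ lamT etaT : ℝ))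
    (hcond : Real.exp (-T) < ‖lamT‖ / (‖lamT‖ + ‖etaT‖))
    (θ : ℝ) (hθ : θ = T + Real.log (‖lamT‖ / (‖lamT‖ + ‖etaT‖))) :
    θ ∈ Set.Ioc (0 : ℝ) T ∧
      ∀ t ∈ Set.Ioc (0 : ℝ) T,
        (lamT + Real.exp (t - T) • (etaT - lamT) = 0 ↔ t = θ) :=
  stmt_1_general n lamT etaT T hanti hcond θ hθ
end

section
/- Fix t ≥ 0, h ∈ ℝ^n, v ≥ 0, ℓ ≥ 0 with ‖h‖ − (t − 1 + e^{−t}) > ℓ. Then θ* := t + (‖h‖ + 1 − ℓ − t)/(1 + v) + W₀(−e^{−(1 + v·t − ℓ + ‖h‖)/(1 + v)}/(1 + v)) satisfies ‖h‖ − (θ* − 1 + e^{−θ*}) = v·(θ* − t) + ℓ, where W₀ is the principal branch of the Lambert W function. -/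
/-!
With `b = 1 + v t - ℓ + ‖h‖` and `c = 1 + v`, the equation to solve is `c θ + e^{-θ} = b`.
Substituting `θ = b / c + w` turns it into `w e^w = -e^{-b/c} / c`, which `W0` solves as soon as
the right-hand side is at least `-e^{-1}`. This holds because `b ≥ 1` (the hypothesis together
with `e^{-t} ≥ 1 - t`) and `log c ≥ 1 - 1/c`.
-/

open Real

theorem neg_exp_neg_one_le_neg_exp_neg_div {a c : ℝ} (hc : 0 < c) (ha : 1 ≤ c * a) :
    -exp (-1) ≤ -exp (-a) / c := by
  have hlog : 1 - c⁻¹ ≤ log c := one_sub_inv_le_log_of_pos hc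
  have ha' : c⁻¹ ≤ a := by rwa [inv_le_iff_one_le_mul₀' hc]
  have hexp : exp (-a) ≤ c * exp (-1) :=
    calc exp (-a) ≤ exp (log c + -1) := exp_le_exp.mpr (by linarith)
      _ = c * exp (-1) := by rw [exp_add, exp_log hc]
  rw [neg_div, neg_le_neg_iff, div_le_iff₀ hc]
  linarith

theorem mul_add_exp_neg_eq_of_mul_exp_eq {b c w : ℝ} (hc : c ≠ 0)
    (hw : w * exp w = -exp (-(b / c)) / c) :
    c * (b / c + w) + exp (-(b / c + w)) = b := by
  have hexp : exp (-(b / c)) = -c * (w * exp w) := by rw [hw]; field_simp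
  rw [neg_add, exp_add, hexp, mul_assoc, mul_assoc, ← exp_add, add_neg_cancel, exp_zero]
  field_simp
  ring

theorem stmt_4_general (n : ℕ) (t : ℝ) (ht : 0 ≤ t) (h : EuclideanSpace ℝ (Fin n))
    (v : ℝ) (hv : 0 ≤ v) (ℓ : ℝ)
    (hgt : ‖h‖ - (t - 1 + Real.exp (-t)) > ℓ)
    (W0 : ℝ → ℝ)
    (hW0 : ∀ x, -Real.exp (-1) ≤ x → W0 x * Real.exp (W0 x) = x ∧ -1 ≤ W0 x)
    (θ : ℝ)
    (hθ : θ = t + (‖h‖ + 1 - ℓ - t) / (1 + v) +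
      W0 (-(Real.exp (-((1 + v * t - ℓ + ‖h‖) / (1 + v)))) / (1 + v))) :
    ‖h‖ - (θ - 1 + Real.exp (-θ)) = v * (θ - t) + ℓ := by
  set b := 1 + v * t - ℓ + ‖h‖
  have hc : 0 < 1 + v := by linarith
  have hb : 1 ≤ (1 + v) * (b / (1 + v)) := by
    rw [mul_div_cancel₀ _ hc.ne']
    nlinarith [add_one_le_exp (-t), mul_nonneg hv ht]
  obtain ⟨hw, -⟩ := hW0 _ (neg_exp_neg_one_le_neg_exp_neg_div hc hb)
  have hθ' : θ = b / (1 + v) + W0 (-exp (-(b / (1 + v))) / (1 + v)) := by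
    rw [hθ]
    congr 1
    field_simp
    ring
  have key := mul_add_exp_neg_eq_of_mul_exp_eq hc.ne' hw
  rw [← hθ'] at key
  linear_combination -key

/-- the best universal lower estimator for position-space interception,
expressed via the principal branch `W0` of the Lambert W function
(characterized by `W0 x * exp (W0 x) = x` and `W0 x ≥ -1` for `x ≥ -1/e`). -/
theorem stmt_4 (n : ℕ) (t : ℝ) (ht : 0 ≤ t) (h : EuclideanSpace ℝ (Fin n))
    (v : ℝ) (hv : 0 ≤ v) (ℓ : ℝ) (hℓ : 0 ≤ ℓ)
    (hgt : ‖h‖ - (t - 1 + Real.exp (-t)) > ℓ)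
    (W0 : ℝ → ℝ)
    (hW0 : ∀ x, -Real.exp (-1) ≤ x → W0 x * Real.exp (W0 x) = x ∧ -1 ≤ W0 x)
    (θ : ℝ)
    (hθ : θ = t + (‖h‖ + 1 - ℓ - t) / (1 + v) +
      W0 (-(Real.exp (-((1 + v * t - ℓ + ‖h‖) / (1 + v)))) / (1 + v))) :
    ‖h‖ - (θ - 1 + Real.exp (-θ)) = v * (θ - t) + ℓ :=
  stmt_4_general n t ht h v hv ℓ hgt W0 hW0 θ hθ
end

section
/- Fix t ≥ 0, h ∈ ℝ^n, v > 0, ℓ ≥ 0 with ‖h‖ − (1 − e^{−t}) > ℓ. Then θ* := t + (‖h‖ − 1 − ℓ)/v + W₀((1/v)·e^{−t + (1 + ℓ − ‖h‖)/v}) satisfies ‖h‖ − (1 − e^{−θ*}) = v·(θ* − t) + ℓ and θ* ≥ t, where W₀ is the principal branch of the Lambert W function. -/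
/-!
Put `a = (1 + ℓ - ‖h‖) / v` and `w = W₀ (e^{-t + a} / v)`, so that `θ* = t - a + w`. The defining
identity `w e^w = e^{-t + a} / v` says exactly `e^{-θ*} = v w`, which turns the equation for `θ*`
into a linear identity. Moreover `ρ(t, h) > ℓ` means `a < e^{-t} / v`, so `a e^a ≤ w e^w` with
`w > 0`, and monotonicity of `u ↦ u e^u` on `[0, ∞)` gives `a ≤ w`, i.e. `θ* ≥ t`.
-/

open Real

lemma le_of_mul_exp_le_mul_exp {a w : ℝ} (hw : 0 ≤ w) (h : a * exp a ≤ w * exp w) : a ≤ w := by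
  by_contra! hwa
  have : w * exp w < a * exp a :=
    mul_lt_mul hwa (exp_le_exp.mpr hwa.le) (exp_pos w) (hw.trans hwa.le)
  linarith

section LambertSolution

variable {r t v ℓ w : ℝ}

lemma exp_neg_lambert_time_eq (hv : v ≠ 0)
    (hw : w * exp w = 1 / v * exp (-t + (1 + ℓ - r) / v)) :
    exp (-(t + (r - 1 - ℓ) / v + w)) = v * w := by
  have hexp : exp (-t + (1 + ℓ - r) / v) = v * (w * exp w) := by
    rw [hw]; field_simp
  calc exp (-(t + (r - 1 - ℓ) / v + w))
      = exp (-t + (1 + ℓ - r) / v) * (exp w)⁻¹ := by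
        rw [← exp_neg, ← exp_add]; congr 1; ring
    _ = v * w := by rw [hexp]; field_simp

lemma lambert_time_solves (hv : v ≠ 0)
    (hw : w * exp w = 1 / v * exp (-t + (1 + ℓ - r) / v)) :
    r - (1 - exp (-(t + (r - 1 - ℓ) / v + w))) = v * (t + (r - 1 - ℓ) / v + w - t) + ℓ := by
  rw [exp_neg_lambert_time_eq hv hw]
  field_simp
  ring

lemma le_lambert_time (hv : 0 < v) (hρ : r - (1 - exp (-t)) > ℓ)
    (hw : w * exp w = 1 / v * exp (-t + (1 + ℓ - r) / v)) :
    t ≤ t + (r - 1 - ℓ) / v + w := by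
  set a := (1 + ℓ - r) / v
  have hw_pos : 0 < w := pos_of_mul_pos_left (hw.trans_gt (by positivity)) (exp_pos w).le
  have ha : a ≤ exp (-t) / v := div_le_div_of_nonneg_right (by linarith) hv.le
  have hmul : a * exp a ≤ w * exp w := by
    rw [hw, exp_add]
    calc a * exp a ≤ exp (-t) / v * exp a := mul_le_mul_of_nonneg_right ha (exp_pos a).le
      _ = 1 / v * (exp (-t) * exp a) := by ring
  have hsum : (r - 1 - ℓ) / v = -a := by simp only [a]; ring
  linarith [le_of_mul_exp_le_mul_exp hw_pos.le hmul]

end LambertSolution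

theorem stmt_5_general (n : ℕ) (t : ℝ) (h : EuclideanSpace ℝ (Fin n))
    (v : ℝ) (hv : 0 < v) (ℓ : ℝ)
    (hgt : ‖h‖ - (1 - Real.exp (-t)) > ℓ)
    (W0 : ℝ → ℝ)
    (hW0 : ∀ x, -Real.exp (-1) ≤ x → W0 x * Real.exp (W0 x) = x ∧ -1 ≤ W0 x)
    (θ : ℝ)
    (hθ : θ = t + (‖h‖ - 1 - ℓ) / v +
      W0 ((1 / v) * Real.exp (-t + (1 + ℓ - ‖h‖) / v))) :
    ‖h‖ - (1 - Real.exp (-θ)) = v * (θ - t) + ℓ ∧ t ≤ θ := by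
  have hw := (hW0 ((1 / v) * exp (-t + (1 + ℓ - ‖h‖) / v))
    ((neg_nonpos.mpr (exp_pos _).le).trans (by positivity))).1
  subst hθ
  exact ⟨lambert_time_solves hv.ne' hw, le_lambert_time hv hgt hw⟩

/-- the best universal lower estimator for velocity-space interception,
expressed via the principal branch `W0` of the Lambert W function. -/
theorem stmt_5 (n : ℕ) (t : ℝ) (ht : 0 ≤ t) (h : EuclideanSpace ℝ (Fin n))
    (v : ℝ) (hv : 0 < v) (ℓ : ℝ) (hℓ : 0 ≤ ℓ)
    (hgt : ‖h‖ - (1 - Real.exp (-t)) > ℓ)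
    (W0 : ℝ → ℝ)
    (hW0 : ∀ x, -Real.exp (-1) ≤ x → W0 x * Real.exp (W0 x) = x ∧ -1 ≤ W0 x)
    (θ : ℝ)
    (hθ : θ = t + (‖h‖ - 1 - ℓ) / v +
      W0 ((1 / v) * Real.exp (-t + (1 + ℓ - ‖h‖) / v))) :
    ‖h‖ - (1 - Real.exp (-θ)) = v * (θ - t) + ℓ ∧ t ≤ θ :=
  stmt_5_general n t h v hv ℓ hgt W0 hW0 θ hθ
end

section
/- Let v₀ ∈ ℝ^n with ‖v₀‖ ≤ 1 and let u : [0,∞) → ℝ^n be measurable with ‖u(t)‖ ≤ 1. Define v(t) = v₀e^{−t} + ∫₀ᵗ u(s)e^{s−t} ds and r(t) = ∫₀ᵗ v(s) ds. Then for every t ≥ 0, r(t) lies in the closed ball of radius t − 1 + e^{−t} centered at v₀(1 − e^{−t}). -/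
/-!
Write `v = e^{-t} v₀ + w` with `w t = ∫₀ᵗ e^{s-t} u s ds`. Since `‖u‖ ≤ 1` and the kernel
`e^{s-t}` has mass `1 - e^{-t}` on `[0, t]`, we get `‖w t‖ ≤ 1 - e^{-t}`. Integrating,
`r t = (1 - e^{-t}) v₀ + ∫₀ᵗ w`, and `‖∫₀ᵗ w‖ ≤ ∫₀ᵗ (1 - e^{-s}) ds = t - 1 + e^{-t}`.
-/

open Real intervalIntegral
open MeasureTheory (volume ae_of_all)

theorem integral_exp_neg_zero (t : ℝ) : ∫ s in (0 : ℝ)..t, exp (-s) = 1 - exp (-t) := by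
  rw [integral_comp_neg (fun x => exp x), neg_zero, integral_exp, exp_zero]

theorem integral_exp_sub_zero (t : ℝ) : ∫ s in (0 : ℝ)..t, exp (s - t) = 1 - exp (-t) := by
  rw [integral_comp_sub_right (fun x => exp x), zero_sub, sub_self, integral_exp, exp_zero]

theorem integral_one_sub_exp_neg_zero (t : ℝ) :
    ∫ s in (0 : ℝ)..t, (1 - exp (-s)) = t - 1 + exp (-t) := by
  rw [integral_sub intervalIntegrable_const
    ((by fun_prop : Continuous fun s => exp (-s)).intervalIntegrable _ _),
    integral_exp_neg_zero, integral_const, smul_eq_mul, mul_one, sub_zero]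
  ring

section ForcedResponse

variable {E : Type*} [NormedAddCommGroup E] [NormedSpace ℝ E] {u : ℝ → E}

theorem integral_exp_sub_smul_eq (u : ℝ → E) (t : ℝ) :
    ∫ s in (0 : ℝ)..t, exp (s - t) • u s = exp (-t) • ∫ s in (0 : ℝ)..t, exp s • u s := by
  rw [← integral_smul]
  refine integral_congr fun s _ => ?_
  rw [smul_smul, ← exp_add, neg_add_eq_sub]

theorem continuous_integral_exp_sub_smul (hu : ∀ a b, IntervalIntegrable u volume a b) :
    Continuous fun t => ∫ s in (0 : ℝ)..t, exp (s - t) • u s := by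
  have hprim : Continuous fun t => ∫ s in (0 : ℝ)..t, exp s • u s :=
    continuous_primitive (fun a b => (hu a b).continuousOn_smul continuous_exp.continuousOn) 0
  simp only [integral_exp_sub_smul_eq]
  fun_prop

theorem norm_integral_exp_sub_smul_le (hu : ∀ s, ‖u s‖ ≤ 1) {t : ℝ} (ht : 0 ≤ t) :
    ‖∫ s in (0 : ℝ)..t, exp (s - t) • u s‖ ≤ 1 - exp (-t) := by
  rw [← integral_exp_sub_zero]
  refine norm_integral_le_of_norm_le ht (ae_of_all _ fun s _ => ?_)
    ((by fun_prop : Continuous fun s => exp (s - t)).intervalIntegrable _ _)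
  rw [norm_smul, norm_of_nonneg (exp_pos _).le]
  exact mul_le_of_le_one_right (exp_pos _).le (hu s)

end ForcedResponse

theorem stmt_12_general (n : ℕ) (v₀ : EuclideanSpace ℝ (Fin n))
    (u : ℝ → EuclideanSpace ℝ (Fin n)) (hu_meas : Measurable u)
    (hu : ∀ t : ℝ, ‖u t‖ ≤ 1)
    (v : ℝ → EuclideanSpace ℝ (Fin n))
    (hv : ∀ t : ℝ, v t = Real.exp (-t) • v₀ +
      ∫ s in (0 : ℝ)..t, Real.exp (s - t) • u s)
    (r : ℝ → EuclideanSpace ℝ (Fin n))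
    (hr : ∀ t : ℝ, r t = ∫ s in (0 : ℝ)..t, v s) :
    ∀ t : ℝ, 0 ≤ t →
      r t ∈ Metric.closedBall ((1 - Real.exp (-t)) • v₀) (t - 1 + Real.exp (-t)) := by
  intro t ht
  set w := fun t => ∫ s in (0 : ℝ)..t, exp (s - t) • u s
  have hu_int : ∀ a b, IntervalIntegrable u volume a b := fun a b =>
    (intervalIntegrable_const (c := (1 : ℝ))).mono_fun hu_meas.aestronglyMeasurable
      (ae_of_all _ fun s => by simpa using hu s)
  have hw_int : IntervalIntegrable w volume 0 t :=
    (continuous_integral_exp_sub_smul hu_int).intervalIntegrable 0 t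
  have hr_sub : r t - (1 - exp (-t)) • v₀ = ∫ s in (0 : ℝ)..t, w s := by
    rw [hr, integral_congr fun s _ => hv s, integral_add
      ((by fun_prop : Continuous fun s => exp (-s) • v₀).intervalIntegrable _ _) hw_int,
      intervalIntegral.integral_smul_const, integral_exp_neg_zero, add_sub_cancel_left]
  rw [Metric.mem_closedBall, dist_eq_norm, hr_sub, ← integral_one_sub_exp_neg_zero]
  exact norm_integral_le_of_norm_le ht
    (ae_of_all _ fun s hs => norm_integral_exp_sub_smul_le hu hs.1.le)
    ((by fun_prop : Continuous fun s => 1 - exp (-s)).intervalIntegrable _ _)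

theorem stmt_12 (n : ℕ) (v₀ : EuclideanSpace ℝ (Fin n)) (hv₀ : ‖v₀‖ ≤ 1)
    (u : ℝ → EuclideanSpace ℝ (Fin n)) (hu_meas : Measurable u)
    (hu : ∀ t : ℝ, ‖u t‖ ≤ 1)
    (v : ℝ → EuclideanSpace ℝ (Fin n))
    (hv : ∀ t : ℝ, v t = Real.exp (-t) • v₀ +
      ∫ s in (0 : ℝ)..t, Real.exp (s - t) • u s)
    (r : ℝ → EuclideanSpace ℝ (Fin n))
    (hr : ∀ t : ℝ, r t = ∫ s in (0 : ℝ)..t, v s) :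
    ∀ t : ℝ, 0 ≤ t →
      r t ∈ Metric.closedBall ((1 - Real.exp (-t)) • v₀) (t - 1 + Real.exp (-t)) :=
  stmt_12_general n v₀ u hu_meas hu v hv r hr
end

section
/- Let λ_T, η_T ∈ ℝ^n with λ_T ≠ 0 satisfy ‖λ_T‖·‖η_T‖ = −⟨λ_T, η_T⟩, and let T > 0 and θ = T + ln(‖λ_T‖/(‖λ_T‖ + ‖η_T‖)). Then for all t ∈ [0, T], ∫₀ᵗ (λ_T + (η_T − λ_T)e^{s−T})/‖λ_T + (η_T − λ_T)e^{s−T}‖ ds = (λ_T/‖λ_T‖)·(|θ| − |t − θ|), where the integrand is defined arbitrarily at the single point where the denominator vanishes. -/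
/-!
Anti-parallelism forces `η_T = -(‖η_T‖/‖λ_T‖) • λ_T`, and the choice of `θ` turns the
integrand's vector into `(1 - exp (s - θ)) • λ_T`. Normalising, the integrand is
`sign (θ - s) • λ_T / ‖λ_T‖` for every `s`, including `s = θ` where both sides are `0`
because `‖0‖⁻¹ = 0`. Finally `s ↦ -|s - θ|` is a primitive of `sign (θ - s)` off the
single point `θ`, which gives `∫₀ᵗ sign (θ - s) ds = |θ| - |t - θ|`.
-/

open Real MeasureTheory Set

theorem monotone_coe_sign : Monotone fun x : ℝ => (SignType.sign x : ℝ) := by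
  intro x y hxy
  obtain hx | rfl | hx := lt_trichotomy x 0 <;> obtain hy | rfl | hy := lt_trichotomy y 0 <;>
    simp [*] <;> linarith

theorem integral_sign_sub (a b c : ℝ) :
    ∫ s in a..b, (SignType.sign (c - s) : ℝ) = |a - c| - |b - c| := by
  have hderiv : ∀ x ∈ Ioo (min a b) (max a b) \ {c},
      HasDerivAt (fun s => -|s - c|) (SignType.sign (c - x) : ℝ) x := by
    rintro x ⟨-, hxc⟩
    refine (((hasDerivAt_abs (sub_ne_zero.mpr hxc)).comp x
      ((hasDerivAt_id x).sub_const c)).neg).congr_deriv ?_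
    rw [← neg_sub x c, Left.sign_neg, SignType.coe_neg, mul_one]
  have hint : IntervalIntegrable (fun s => (SignType.sign (c - s) : ℝ)) volume a b :=
    (monotone_coe_sign.comp_antitone fun _ _ h => sub_le_sub_left h c).intervalIntegrable
  rw [integral_eq_of_hasDerivAt_off_countable _ _ (countable_singleton c) (by fun_prop)
    hderiv hint]
  ring

theorem sign_one_sub_exp (x : ℝ) : SignType.sign (1 - exp x) = SignType.sign (-x) := by
  obtain hx | rfl | hx := lt_trichotomy x 0
  · rw [sign_eq_one_iff.mpr (sub_pos.mpr (exp_lt_one_iff.mpr hx)),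
      sign_eq_one_iff.mpr (neg_pos.mpr hx)]
  · simp
  · rw [sign_eq_neg_one_iff.mpr (sub_neg.mpr (one_lt_exp_iff.mpr hx)),
      sign_eq_neg_one_iff.mpr (neg_neg_iff_pos.mpr hx)]

section NormedSpace

variable {E : Type*} [NormedAddCommGroup E] [NormedSpace ℝ E]

theorem inv_norm_smul_smul_eq_sign_div_norm_smul (c : ℝ) (v : E) :
    ‖c • v‖⁻¹ • c • v = ((SignType.sign c : ℝ) / ‖v‖) • v := by
  rcases eq_or_ne c 0 with rfl | hc
  · simp
  have hsign : |c|⁻¹ * c = SignType.sign c := by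
    rw [inv_mul_eq_iff_eq_mul₀ (abs_ne_zero.mpr hc), mul_comm, sign_mul_abs]
  rw [smul_smul, norm_smul, norm_eq_abs, mul_inv, mul_right_comm, hsign, div_eq_mul_inv]

end NormedSpace

section InnerProductSpace

variable {F : Type*} [NormedAddCommGroup F] [InnerProductSpace ℝ F]

theorem eq_neg_smul_of_norm_mul_norm_eq_neg_inner {x y : F} (hx : x ≠ 0)
    (h : ‖x‖ * ‖y‖ = -inner ℝ x y) : y = -(‖y‖ / ‖x‖) • x := by
  have hpar : ‖y‖ • x = ‖x‖ • -y := by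
    simpa using inner_eq_norm_mul_iff_real.mp (by rw [inner_neg_right, norm_neg]; linarith :
      inner ℝ x (-y) = ‖x‖ * ‖-y‖)
  calc y = -(‖x‖⁻¹ • ‖x‖ • -y) := by rw [inv_smul_smul₀ (norm_ne_zero_iff.mpr hx), neg_neg]
    _ = -(‖y‖ / ‖x‖) • x := by rw [← hpar, smul_smul, inv_mul_eq_div, neg_smul]

theorem add_exp_smul_sub_eq_one_sub_exp_smul {lam eta : F} (hlam : lam ≠ 0)
    (hanti : ‖lam‖ * ‖eta‖ = -inner ℝ lam eta) {T θ : ℝ}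
    (hθ : θ = T + log (‖lam‖ / (‖lam‖ + ‖eta‖))) (s : ℝ) :
    lam + exp (s - T) • (eta - lam) = (1 - exp (s - θ)) • lam := by
  have hlam' : 0 < ‖lam‖ := norm_pos_iff.mpr hlam
  have hsub : eta - lam = -(1 + ‖eta‖ / ‖lam‖) • lam := by
    conv_lhs => rw [eq_neg_smul_of_norm_mul_norm_eq_neg_inner hlam hanti]
    module
  have hexp : exp (s - θ) = exp (s - T) * (1 + ‖eta‖ / ‖lam‖) := by
    rw [hθ, show s - (T + log (‖lam‖ / (‖lam‖ + ‖eta‖))) =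
      (s - T) - log (‖lam‖ / (‖lam‖ + ‖eta‖)) by ring, exp_sub, exp_log (by positivity)]
    field_simp
  rw [hsub, hexp]
  module

end InnerProductSpace

theorem stmt_15_general (n : ℕ) (lamT etaT : EuclideanSpace ℝ (Fin n)) (hlam : lamT ≠ 0)
    (hanti : ‖lamT‖ * ‖etaT‖ = -(inner ℝ lamT etaT : ℝ))
    (T : ℝ)
    (θ : ℝ) (hθ : θ = T + Real.log (‖lamT‖ / (‖lamT‖ + ‖etaT‖))) :
    ∀ t ∈ Set.Icc (0 : ℝ) T,
      (∫ s in (0 : ℝ)..t,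
          ‖lamT + Real.exp (s - T) • (etaT - lamT)‖⁻¹ •
            (lamT + Real.exp (s - T) • (etaT - lamT))) =
        ((|θ| - |t - θ|) / ‖lamT‖) • lamT := by
  intro t _
  calc _ = ∫ s in (0 : ℝ)..t, ((SignType.sign (θ - s) : ℝ) / ‖lamT‖) • lamT := by
        refine intervalIntegral.integral_congr fun s _ => ?_
        simp only [add_exp_smul_sub_eq_one_sub_exp_smul hlam hanti hθ,
          inv_norm_smul_smul_eq_sign_div_norm_smul, sign_one_sub_exp, neg_sub]
    _ = _ := by
      rw [intervalIntegral.integral_smul_const, intervalIntegral.integral_div,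
        integral_sign_sub, zero_sub, abs_neg]

/-- the integrand `‖·‖⁻¹ • ·` takes the junk value `0` at the single
point where the vector vanishes, matching "defined arbitrarily" there. -/
theorem stmt_15 (n : ℕ) (lamT etaT : EuclideanSpace ℝ (Fin n)) (hlam : lamT ≠ 0)
    (hanti : ‖lamT‖ * ‖etaT‖ = -(inner ℝ lamT etaT : ℝ))
    (T : ℝ) (hT : 0 < T)
    (θ : ℝ) (hθ : θ = T + Real.log (‖lamT‖ / (‖lamT‖ + ‖etaT‖))) :
    ∀ t ∈ Set.Icc (0 : ℝ) T,
      (∫ s in (0 : ℝ)..t,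
          ‖lamT + Real.exp (s - T) • (etaT - lamT)‖⁻¹ •
            (lamT + Real.exp (s - T) • (etaT - lamT))) =
        ((|θ| - |t - θ|) / ‖lamT‖) • lamT :=
  stmt_15_general n lamT etaT hlam hanti T θ hθ
end

section
/- Let h_T : [0,∞) → ℝ^n be v-Lipschitz (v ≥ 0, v < 1), ℓ ≥ 0, and define ρ(t, h) = max(0, ‖h‖ − (t − 1 + e^{−t})) and τ(t) = t + (ρ(t, h_T(t)) − ℓ)/(1 + v) if ρ(t, h_T(t)) > ℓ, else τ(t) = t. Then the sequence t₀ = 0, t_{i+1} = τ(t_i) is non-decreasing, and if ρ(t, h_T(t)) > ℓ for all t in some interval [t_i, θ], then t_{i+1} ≤ θ whenever ρ(θ, h_T(θ)) ≤ ℓ; i.e., each iterate never exceeds the first time at which ρ(t, h_T(t)) ≤ ℓ. -/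
/-!
Write `g(s) = ‖h_T(s)‖ - (s - 1 + e^{-s})`, so that `ρ = max 0 g`. The radius `s - 1 + e^{-s}`
grows at rate at most one and `‖h_T‖` changes at rate at most `v`, so `ρ` decreases at rate at
most `1 + v`. Hence from `ρ(s) > ℓ ≥ ρ(θ)` we get `θ - s ≥ (ρ(s) - ℓ) / (1 + v)`: the step `τ`
never jumps past a time at which `ρ ≤ ℓ`, while it clearly never moves backwards.
-/

open Real

noncomputable def lowerEstimatorStep (ρ : ℝ → ℝ) (ℓ c s : ℝ) : ℝ :=
  if ℓ < ρ s then s + (ρ s - ℓ) / c else s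

section LowerEstimatorStep

variable {ρ : ℝ → ℝ} {ℓ c s θ : ℝ}

theorem le_lowerEstimatorStep (hc : 0 ≤ c) : s ≤ lowerEstimatorStep ρ ℓ c s := by
  unfold lowerEstimatorStep
  split_ifs with h
  · have : 0 ≤ (ρ s - ℓ) / c := div_nonneg (by linarith) hc
    linarith
  · exact le_rfl

theorem lowerEstimatorStep_le (hc : 0 < c) (hsθ : s ≤ θ) (hρ : ρ s - ρ θ ≤ c * (θ - s))
    (hθ : ρ θ ≤ ℓ) : lowerEstimatorStep ρ ℓ c s ≤ θ := by
  unfold lowerEstimatorStep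
  split_ifs
  · have : (ρ s - ℓ) / c ≤ θ - s := by rw [div_le_iff₀ hc]; linarith
    linarith
  · exact hsθ

end LowerEstimatorStep

/-- Radius at time `s` of the position-space reachable ball of a rocket with `v_max = 1`
starting at rest. -/
noncomputable def reachRadius (s : ℝ) : ℝ := s - 1 + exp (-s)

theorem reachRadius_sub_reachRadius_le {s θ : ℝ} (hsθ : s ≤ θ) :
    reachRadius θ - reachRadius s ≤ θ - s := by
  unfold reachRadius
  have : exp (-θ) ≤ exp (-s) := exp_le_exp.mpr (neg_le_neg hsθ)
  linarith

theorem LipschitzOnWith.norm_sub_reachRadius_sub_le {E : Type*} [SeminormedAddCommGroup E]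
    {f : ℝ → E} {K : NNReal} (hf : LipschitzOnWith K f (Set.Ici 0)) {s θ : ℝ} (hs : 0 ≤ s)
    (hsθ : s ≤ θ) :
    (‖f s‖ - reachRadius s) - (‖f θ‖ - reachRadius θ) ≤ (1 + K) * (θ - s) := by
  have hnorm : ‖f s‖ - ‖f θ‖ ≤ K * (θ - s) :=
    calc ‖f s‖ - ‖f θ‖ ≤ dist (f s) (f θ) := dist_eq_norm (f s) (f θ) ▸ norm_sub_norm_le _ _
      _ ≤ K * dist s θ := hf.dist_le_mul s hs θ (hs.trans hsθ)
      _ = K * (θ - s) := by rw [dist_comm, Real.dist_eq, abs_of_nonneg (sub_nonneg.mpr hsθ)]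
  linarith [reachRadius_sub_reachRadius_le hsθ]

theorem stmt_18_general (n : ℕ) (hT : ℝ → EuclideanSpace ℝ (Fin n))
    (v : ℝ) (hv : 0 ≤ v)
    (hLip : LipschitzOnWith (Real.toNNReal v) hT (Set.Ici 0))
    (ℓ : ℝ)
    (ρ : ℝ → ℝ) (hρ : ∀ s : ℝ, ρ s = max 0 (‖hT s‖ - (s - 1 + Real.exp (-s))))
    (τ : ℝ → ℝ) (hτ : ∀ s : ℝ, τ s = if ℓ < ρ s then s + (ρ s - ℓ) / (1 + v) else s)
    (t : ℕ → ℝ) (ht0 : t 0 = 0) (hts : ∀ i : ℕ, t (i + 1) = τ (t i)) :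
    Monotone t ∧
      ∀ (i : ℕ) (θ : ℝ), t i ≤ θ →
        (∀ s ∈ Set.Ico (t i) θ, ℓ < ρ s) → ρ θ ≤ ℓ → t (i + 1) ≤ θ := by
  have hτ : τ = lowerEstimatorStep ρ ℓ (1 + v) := funext hτ
  have hmono : Monotone t :=
    monotone_nat_of_le_succ fun i => (hts i).symm ▸ hτ ▸ le_lowerEstimatorStep (by positivity)
  refine ⟨hmono, fun i θ hle _ hθ => ?_⟩
  have hti : 0 ≤ t i := ht0 ▸ hmono (Nat.zero_le i)
  have hρ_sub : ρ (t i) - ρ θ ≤ (1 + v) * (θ - t i) := by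
    rw [hρ, hρ]
    refine (max_sub_max_le_max _ _ _ _).trans (max_le (by nlinarith) ?_)
    simpa [reachRadius, Real.coe_toNNReal v hv] using hLip.norm_sub_reachRadius_sub_le hti hle
  rw [hts, hτ]
  exact lowerEstimatorStep_le (by positivity) hle hρ_sub hθ

theorem stmt_18 (n : ℕ) (hT : ℝ → EuclideanSpace ℝ (Fin n))
    (v : ℝ) (hv : 0 ≤ v) (hv1 : v < 1)
    (hLip : LipschitzOnWith (Real.toNNReal v) hT (Set.Ici 0))
    (ℓ : ℝ) (hℓ : 0 ≤ ℓ)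
    (ρ : ℝ → ℝ) (hρ : ∀ s : ℝ, ρ s = max 0 (‖hT s‖ - (s - 1 + Real.exp (-s))))
    (τ : ℝ → ℝ) (hτ : ∀ s : ℝ, τ s = if ℓ < ρ s then s + (ρ s - ℓ) / (1 + v) else s)
    (t : ℕ → ℝ) (ht0 : t 0 = 0) (hts : ∀ i : ℕ, t (i + 1) = τ (t i)) :
    Monotone t ∧
      ∀ (i : ℕ) (θ : ℝ), t i ≤ θ →
        (∀ s ∈ Set.Ico (t i) θ, ℓ < ρ s) → ρ θ ≤ ℓ → t (i + 1) ≤ θ :=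
  stmt_18_general n hT v hv hLip ℓ ρ hρ τ hτ t ht0 hts
end
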